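/- Let C1 and C2 be rigidity circuits on a common finite vertex type such that V(C1) ∩ V(C2) = {u, v} consists of exactly two vertices and C1 ∩ C2 = {uv} consists of exactly the edge uv. Then the 2-sum (C1 ∪ C2) \ {uv} is a rigidity circuit. -/

import Mathlib

open Finset

variable {V : Type*} [Fintype V] [DecidableEq V]

/-- An edge set: a finite set of unordered pairs of distinct vertices (no loops). -/
def IsEdgeSet (E : Finset (Sym2 V)) : Prop := ∀ e ∈ E, ¬ e.IsDiag

/-- The vertex span `V(E)`: vertices incident to at least one edge of `E`. -/
def vertexSpan (E : Finset (Sym2 V)) : Finset V :=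
  Finset.univ.filter fun v => ∃ e ∈ E, v ∈ e

/-- `(2,3)`-sparsity: every nonempty subset `E' ⊆ E` has `|E'| ≤ 2|V(E')| - 3`. -/
def Sparse23 (E : Finset (Sym2 V)) : Prop :=
  ∀ E' ⊆ E, E'.Nonempty → (E'.card : ℤ) ≤ 2 * (vertexSpan E').card - 3

/-- An edge set is dependent if it is not `(2,3)`-sparse. -/
def DependentES (E : Finset (Sym2 V)) : Prop := ¬ Sparse23 E

/-- A rigidity circuit: a dependent edge set all of whose proper subsets are `(2,3)`-sparse. -/
def IsRigidityCircuit (E : Finset (Sym2 V)) : Prop :=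
  IsEdgeSet E ∧ DependentES E ∧ ∀ E' ⊂ E, Sparse23 E'

/-! A circuit `C` has exactly `2|V(C)| - 2` edges, and deleting one edge keeps its vertex span.
Hence the 2-sum `D` of `C₁` and `C₂` has `|D| = 2|V(D)| - 2`, so it is dependent. A proper subset
`F ⊂ D` splits into `A ⊂ C₁` and `B ⊂ C₂` sharing at most the two vertices `u, v`. If they share
fewer, sparsity of `A` and `B` already gives the count for `F`. If they share both, one of `A`, `B`,
say `A`, misses an edge of `C₁ - uv`; then `A + uv` is still a proper subset of `C₁`, so `A` obeys
the stronger bound `|A| ≤ 2|V(A)| - 4`, which pays for the second shared vertex. -/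

section VertexSpan

variable {E F : Finset (Sym2 V)}

@[simp]
lemma mem_vertexSpan {w : V} : w ∈ vertexSpan E ↔ ∃ e ∈ E, w ∈ e := by
  simp [vertexSpan]

lemma vertexSpan_mono (h : E ⊆ F) : vertexSpan E ⊆ vertexSpan F := by
  intro w
  simp only [mem_vertexSpan]
  exact fun ⟨e, he, hw⟩ => ⟨e, h he, hw⟩

lemma vertexSpan_union : vertexSpan (E ∪ F) = vertexSpan E ∪ vertexSpan F := by
  ext w
  simp [or_and_right, exists_or]

lemma vertexSpan_insert_mk (a b : V) :
    vertexSpan (insert s(a, b) E) = insert a (insert b (vertexSpan E)) := by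
  ext w
  simp [or_assoc]

lemma card_vertexSpan_union :
    (#(vertexSpan (E ∪ F)) : ℤ) =
      #(vertexSpan E) + #(vertexSpan F) - #(vertexSpan E ∩ vertexSpan F) := by
  have := card_union_add_card_inter (vertexSpan E) (vertexSpan F)
  rw [vertexSpan_union]
  omega

lemma IsEdgeSet.two_le_card_vertexSpan (hE : IsEdgeSet E) (hne : E.Nonempty) :
    2 ≤ #(vertexSpan E) := by
  obtain ⟨e, he⟩ := hne
  induction e using Sym2.ind with
  | _ a b =>
    have hab : a ≠ b := by simpa using hE _ he
    calc 2 = #{a, b} := (card_pair hab).symm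
      _ ≤ #(vertexSpan E) := card_le_card fun w hw => mem_vertexSpan.mpr
        ⟨s(a, b), he, by rcases mem_insert.mp hw with rfl | hw <;> simp_all⟩

end VertexSpan

namespace IsRigidityCircuit

variable {C F : Finset (Sym2 V)}

lemma card_le_of_ssubset (hC : IsRigidityCircuit C) (hF : F ⊂ C) (hne : F.Nonempty) :
    (#F : ℤ) ≤ 2 * #(vertexSpan F) - 3 :=
  hC.2.2 F hF F le_rfl hne

lemma le_card (hC : IsRigidityCircuit C) : 2 * (#(vertexSpan C) : ℤ) - 2 ≤ #C := by
  by_contra! h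
  refine hC.2.1 fun F hF hne => ?_
  rcases hF.eq_or_ssubset with rfl | hF
  · omega
  · exact hC.card_le_of_ssubset hF hne

lemma nonempty (hC : IsRigidityCircuit C) : C.Nonempty := by
  rw [nonempty_iff_ne_empty]
  rintro rfl
  exact hC.2.1 fun F hF hne => absurd (subset_empty.mp hF) hne.ne_empty

lemma two_le_card (hC : IsRigidityCircuit C) : 2 ≤ #C := by
  have := hC.le_card
  have := hC.1.two_le_card_vertexSpan hC.nonempty
  omega

lemma erase_nonempty (hC : IsRigidityCircuit C) (e : Sym2 V) : (C.erase e).Nonempty := by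
  rw [← card_pos]
  have := hC.two_le_card
  have := pred_card_le_card_erase (s := C) (a := e)
  omega

lemma card_le_of_erase (hC : IsRigidityCircuit C) {e : Sym2 V} (he : e ∈ C) :
    (#C : ℤ) ≤ 2 * #(vertexSpan (C.erase e)) - 2 := by
  have := hC.card_le_of_ssubset (erase_ssubset he) (hC.erase_nonempty e)
  have : (#(C.erase e) : ℤ) + 1 = #C := by exact_mod_cast card_erase_add_one he
  omega

lemma card_eq (hC : IsRigidityCircuit C) : (#C : ℤ) = 2 * #(vertexSpan C) - 2 := by
  obtain ⟨e, he⟩ := hC.nonempty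
  have := hC.le_card
  have := hC.card_le_of_erase he
  have := card_le_card (vertexSpan_mono (erase_subset e C))
  omega

lemma vertexSpan_erase (hC : IsRigidityCircuit C) {e : Sym2 V} (he : e ∈ C) :
    vertexSpan (C.erase e) = vertexSpan C := by
  refine eq_of_subset_of_card_le (vertexSpan_mono (erase_subset e C)) ?_
  have := hC.card_eq
  have := hC.card_le_of_erase he
  omega

lemma card_le_of_ssubset_erase (hC : IsRigidityCircuit C) {u v : V} (he : s(u, v) ∈ C)
    (hF : F ⊂ C.erase s(u, v)) (hu : u ∈ vertexSpan F) (hv : v ∈ vertexSpan F) :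
    (#F : ℤ) ≤ 2 * #(vertexSpan F) - 4 := by
  have heF : s(u, v) ∉ F := fun h => (mem_erase.mp (hF.subset h)).1 rfl
  have hss : insert s(u, v) F ⊂ C := by
    refine ssubset_of_subset_of_ne (insert_subset he (hF.subset.trans (erase_subset _ _))) ?_
    rintro rfl
    exact hF.ne (erase_insert heF).symm
  have := hC.card_le_of_ssubset hss (insert_nonempty _ _)
  rw [vertexSpan_insert_mk, insert_eq_of_mem hv, insert_eq_of_mem hu,
    card_insert_of_notMem heF] at this
  push_cast at this
  omega

end IsRigidityCircuit

section TwoSum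

variable {C₁ C₂ : Finset (Sym2 V)} {u v : V}

lemma twoSum_card_le {A B : Finset (Sym2 V)}
    (hC₁ : IsRigidityCircuit C₁) (hC₂ : IsRigidityCircuit C₂)
    (he₁ : s(u, v) ∈ C₁) (he₂ : s(u, v) ∈ C₂) (hV : vertexSpan C₁ ∩ vertexSpan C₂ ⊆ {u, v})
    (hA : A ⊆ C₁.erase s(u, v)) (hB : B ⊆ C₂.erase s(u, v)) (hAB : Disjoint A B)
    (hproper : A ≠ C₁.erase s(u, v) ∨ B ≠ C₂.erase s(u, v)) (hne : (A ∪ B).Nonempty) :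
    (#(A ∪ B) : ℤ) ≤ 2 * #(vertexSpan (A ∪ B)) - 3 := by
  have hA₁ : A ⊂ C₁ := hA.trans_ssubset (erase_ssubset he₁)
  have hB₂ : B ⊂ C₂ := hB.trans_ssubset (erase_ssubset he₂)
  rcases A.eq_empty_or_nonempty with rfl | hAne
  · rw [empty_union] at hne ⊢
    exact hC₂.card_le_of_ssubset hB₂ hne
  rcases B.eq_empty_or_nonempty with rfl | hBne
  · rw [union_empty] at hne ⊢
    exact hC₁.card_le_of_ssubset hA₁ hne
  have hshared : vertexSpan A ∩ vertexSpan B ⊆ {u, v} :=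
    (inter_subset_inter (vertexSpan_mono hA₁.subset) (vertexSpan_mono hB₂.subset)).trans hV
  have hA₃ := hC₁.card_le_of_ssubset hA₁ hAne
  have hB₃ := hC₂.card_le_of_ssubset hB₂ hBne
  have hk := (card_le_card hshared).trans card_le_two
  rw [card_union_of_disjoint hAB, card_vertexSpan_union]
  push_cast
  rcases Nat.lt_or_ge #(vertexSpan A ∩ vertexSpan B) 2 with hk₁ | hk₂
  · omega
  have hUV : vertexSpan A ∩ vertexSpan B = {u, v} :=
    eq_of_subset_of_card_le hshared (card_le_two.trans hk₂)
  have hu : u ∈ vertexSpan A ∩ vertexSpan B := hUV ▸ mem_insert_self u {v}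
  have hv : v ∈ vertexSpan A ∩ vertexSpan B := hUV ▸ mem_insert_of_mem (mem_singleton_self v)
  rw [mem_inter] at hu hv
  rcases hproper with hA' | hB'
  · have := hC₁.card_le_of_ssubset_erase he₁ (ssubset_of_subset_of_ne hA hA') hu.1 hv.1
    omega
  · have := hC₂.card_le_of_ssubset_erase he₂ (ssubset_of_subset_of_ne hB hB') hu.2 hv.2
    omega

lemma twoSum_card_le_of_ssubset {F : Finset (Sym2 V)}
    (hC₁ : IsRigidityCircuit C₁) (hC₂ : IsRigidityCircuit C₂)
    (he₁ : s(u, v) ∈ C₁) (he₂ : s(u, v) ∈ C₂) (hV : vertexSpan C₁ ∩ vertexSpan C₂ ⊆ {u, v})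
    (hdisj : Disjoint (C₁.erase s(u, v)) (C₂.erase s(u, v)))
    (hF : F ⊂ C₁.erase s(u, v) ∪ C₂.erase s(u, v)) (hne : F.Nonempty) :
    (#F : ℤ) ≤ 2 * #(vertexSpan F) - 3 := by
  have hsplit : F ∩ C₁.erase s(u, v) ∪ F ∩ C₂.erase s(u, v) = F := by
    rw [← inter_union_distrib_left, inter_eq_left.mpr hF.subset]
  have hproper : F ∩ C₁.erase s(u, v) ≠ C₁.erase s(u, v) ∨
      F ∩ C₂.erase s(u, v) ≠ C₂.erase s(u, v) := by
    by_contra! h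
    exact hF.not_subset (union_subset (h.1 ▸ inter_subset_left) (h.2 ▸ inter_subset_left))
  rw [← hsplit] at hne ⊢
  exact twoSum_card_le hC₁ hC₂ he₁ he₂ hV inter_subset_right inter_subset_right
    (hdisj.mono inter_subset_right inter_subset_right) hproper hne

lemma twoSum_card_eq (hC₁ : IsRigidityCircuit C₁) (hC₂ : IsRigidityCircuit C₂)
    (he₁ : s(u, v) ∈ C₁) (he₂ : s(u, v) ∈ C₂) (huv : u ≠ v)
    (hV : vertexSpan C₁ ∩ vertexSpan C₂ = {u, v})
    (hdisj : Disjoint (C₁.erase s(u, v)) (C₂.erase s(u, v))) :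
    (#(C₁.erase s(u, v) ∪ C₂.erase s(u, v)) : ℤ) =
      2 * #(vertexSpan (C₁.erase s(u, v) ∪ C₂.erase s(u, v))) - 2 := by
  have h₁ : (#(C₁.erase s(u, v)) : ℤ) + 1 = #C₁ := by exact_mod_cast card_erase_add_one he₁
  have h₂ : (#(C₂.erase s(u, v)) : ℤ) + 1 = #C₂ := by exact_mod_cast card_erase_add_one he₂
  rw [card_union_of_disjoint hdisj, card_vertexSpan_union, hC₁.vertexSpan_erase he₁,
    hC₂.vertexSpan_erase he₂, hV, card_pair huv]
  push_cast
  linarith [hC₁.card_eq, hC₂.card_eq]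

end TwoSum

theorem twoSum_of_circuits_isCircuit_general (C1 C2 : Finset (Sym2 V)) (u v : V)
    (hC1 : IsRigidityCircuit C1) (hC2 : IsRigidityCircuit C2)
    (hV : vertexSpan C1 ∩ vertexSpan C2 = {u, v})
    (hE : C1 ∩ C2 = {s(u, v)}) :
    IsRigidityCircuit ((C1 ∪ C2) \ {s(u, v)}) := by
  have he₁ : s(u, v) ∈ C1 := (mem_inter.mp (hE ▸ mem_singleton_self _)).1
  have he₂ : s(u, v) ∈ C2 := (mem_inter.mp (hE ▸ mem_singleton_self _)).2
  have huv : u ≠ v := fun h => hC1.1 _ he₁ (by simp [h])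
  have hdisj : Disjoint (C1.erase s(u, v)) (C2.erase s(u, v)) := by
    rw [disjoint_iff_inter_eq_empty, erase_inter, inter_erase, hE, erase_singleton, erase_empty]
  rw [sdiff_singleton_eq_erase, erase_union_distrib]
  refine ⟨?_, ?_, fun F hF G hG hne => ?_⟩
  · intro e he
    rcases mem_union.mp he with h | h
    · exact hC1.1 e (mem_of_mem_erase h)
    · exact hC2.1 e (mem_of_mem_erase h)
  · intro hsparse
    have := hsparse _ subset_rfl ((hC1.erase_nonempty _).mono subset_union_left)
    have := twoSum_card_eq hC1 hC2 he₁ he₂ huv hV hdisj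
    omega
  · exact twoSum_card_le_of_ssubset hC1 hC2 he₁ he₂ hV.subset hdisj (hG.trans_ssubset hF) hne

/-- The 2-sum of two rigidity circuits sharing exactly two vertices `u, v` and exactly the
edge `uv` is a rigidity circuit. -/
theorem twoSum_of_circuits_isCircuit (C1 C2 : Finset (Sym2 V)) (u v : V) (huv : u ≠ v)
    (hC1 : IsRigidityCircuit C1) (hC2 : IsRigidityCircuit C2)
    (hV : vertexSpan C1 ∩ vertexSpan C2 = {u, v})
    (hE : C1 ∩ C2 = {s(u, v)}) :
    IsRigidityCircuit ((C1 ∪ C2) \ {s(u, v)}) :=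
  twoSum_of_circuits_isCircuit_general C1 C2 u v hC1 hC2 hV hE
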